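/- Let G be a finite simple graph with n vertices and m ≥ 1 edges. Then, as real numbers, NK(G^{+--}) ≤ m^n · ((m+n-1) - M1(G)/m)^m; moreover, equality holds if G is regular. -/

import Mathlib

open Finset

variable {V : Type*}

/-- The Narumi–Katayama index: the product of the degrees of all vertices. -/
def NK {W : Type*} [Fintype W] (H : SimpleGraph W) [DecidableRel H.Adj] : ℕ :=
  ∏ v, H.degree v

/-- The first Zagreb index: the sum of the squares of the degrees. -/
def M1 [Fintype V] (G : SimpleGraph V) [DecidableRel G.Adj] : ℕ :=
  ∑ v, (G.degree v) ^ 2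

/-- The multiplicative sum Zagreb index: the product over the edges of `G` of the
sum of the degrees of the two endpoints. -/
def Pi1Star [Fintype V] [DecidableEq V] (G : SimpleGraph V) [DecidableRel G.Adj] : ℕ :=
  ∏ e ∈ G.edgeFinset,
    Sym2.lift ⟨fun u v => G.degree u + G.degree v, fun u v => by simp [Nat.add_comm]⟩ e

/-- A generic transformation graph on the vertex set `V(G) ∪ E(G)`, built from a
symmetric irreflexive relation `Rvv` between vertices, a symmetric irreflexive relation
`Ree` between edges, and an incidence relation `Rve` between vertices and edges. -/
def transGraph (G : SimpleGraph V) (Rvv : V → V → Prop) (Ree : Sym2 V → Sym2 V → Prop)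
    (Rve : V → Sym2 V → Prop)
    (hvv : Symmetric Rvv) (hvv' : Irreflexive Rvv)
    (hee : Symmetric Ree) (hee' : Irreflexive Ree) :
    SimpleGraph (V ⊕ G.edgeSet) where
  Adj a b :=
    match a, b with
    | Sum.inl u, Sum.inl v => Rvv u v
    | Sum.inr e, Sum.inr f => Ree e.1 f.1
    | Sum.inl u, Sum.inr e => Rve u e.1
    | Sum.inr e, Sum.inl u => Rve u e.1
  symm := by
    constructor
    rintro (u | e) (v | f) h
    · exact hvv h
    · exact h
    · exact h
    · exact hee h
  loopless := by
    constructor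
    rintro (u | e) h
    · exact hvv' u h
    · exact hee' e.1 h

instance transGraph.instDecidableAdj (G : SimpleGraph V) (Rvv : V → V → Prop)
    (Ree : Sym2 V → Sym2 V → Prop) (Rve : V → Sym2 V → Prop)
    (h1 : Symmetric Rvv) (h2 : Irreflexive Rvv) (h3 : Symmetric Ree) (h4 : Irreflexive Ree)
    [DecidableRel Rvv] [DecidableRel Ree] [∀ u e, Decidable (Rve u e)] :
    DecidableRel (transGraph G Rvv Ree Rve h1 h2 h3 h4).Adj := fun a b =>
  match a, b with
  | Sum.inl u, Sum.inl v => inferInstanceAs (Decidable (Rvv u v))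
  | Sum.inr e, Sum.inr f => inferInstanceAs (Decidable (Ree e.1 f.1))
  | Sum.inl u, Sum.inr e => inferInstanceAs (Decidable (Rve u e.1))
  | Sum.inr e, Sum.inl u => inferInstanceAs (Decidable (Rve u e.1))

/-- Two edges (as elements of `Sym2 V`) are adjacent: distinct and sharing an endpoint. -/
abbrev shareRel : Sym2 V → Sym2 V → Prop := fun e f => e ≠ f ∧ ∃ w, w ∈ e ∧ w ∈ f

lemma shareRel_symm : Symmetric (shareRel (V := V)) :=
  fun _ _ h => ⟨h.1.symm, h.2.imp fun _ hw => ⟨hw.2, hw.1⟩⟩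

lemma shareRel_irrefl : Irreflexive (shareRel (V := V)) := fun _ h => h.1 rfl

/-- Two edges are "non-adjacent": distinct and sharing no endpoint. -/
abbrev coshareRel : Sym2 V → Sym2 V → Prop := fun e f => e ≠ f ∧ ∀ w, w ∈ e → w ∉ f

lemma coshareRel_symm : Symmetric (coshareRel (V := V)) :=
  fun _ _ h => ⟨h.1.symm, fun w hf he => h.2 w he hf⟩

lemma coshareRel_irrefl : Irreflexive (coshareRel (V := V)) := fun _ h => h.1 rfl

/-- Non-adjacency of distinct vertices. -/
abbrev coAdj (G : SimpleGraph V) : V → V → Prop := fun u v => u ≠ v ∧ ¬ G.Adj u v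

lemma coAdj_symm (G : SimpleGraph V) : Symmetric (coAdj G) :=
  fun _ _ h => ⟨h.1.symm, fun ha => h.2 ha.symm⟩

lemma coAdj_irrefl (G : SimpleGraph V) : Irreflexive (coAdj G) := fun _ h => h.1 rfl

variable [Fintype V] [DecidableEq V]

/-- The total transformation graph `G^{+--}`. -/
abbrev Gpmm (G : SimpleGraph V) [DecidableRel G.Adj] : SimpleGraph (V ⊕ G.edgeSet) :=
  transGraph G G.Adj coshareRel (fun u e => u ∉ e)
    (@id (Symmetric G.Adj) fun _ _ h => G.adj_symm h) (@id (Irreflexive G.Adj) fun _ h => G.irrefl h)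
    coshareRel_symm coshareRel_irrefl


/-! In `G^{+--}` a vertex `u` is adjacent to its `d(u)` neighbours and to the `m - d(u)` edges
avoiding it, so it has degree `m`. An edge `ab` is adjacent to the `n - 2` other vertices and to
the `m - (d(a) + d(b) - 1)` edges disjoint from it, so it has degree `m + n - 1 - (d(a) + d(b))`.
Summing `d(a) + d(b)` over the edges gives `M1(G)`, so the edge degrees have mean
`(m + n - 1) - M1(G)/m`, and AM-GM bounds their product by the `m`-th power of that mean. When
`G` is regular all edge degrees coincide and AM-GM is an equality. -/

theorem Real.prod_le_mean_pow_card {ι : Type*} (s : Finset ι) (z : ι → ℝ)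
    (hz : ∀ i ∈ s, 0 ≤ z i) :
    ∏ i ∈ s, z i ≤ ((∑ i ∈ s, z i) / #s) ^ #s := by
  rcases s.eq_empty_or_nonempty with rfl | hs
  · simp
  have hcard : (0 : ℝ) < #s := by exact_mod_cast hs.card_pos
  have hgm := Real.geom_mean_le_arith_mean s (fun _ ↦ 1) z (fun _ _ ↦ zero_le_one)
    (by simpa using hs.card_pos) hz
  simp only [Real.rpow_one, one_mul, sum_const, nsmul_eq_mul, mul_one] at hgm
  calc ∏ i ∈ s, z i = ((∏ i ∈ s, z i) ^ (#s : ℝ)⁻¹) ^ #s := by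
        rw [← Real.rpow_natCast, ← Real.rpow_mul (prod_nonneg hz), inv_mul_cancel₀ hcard.ne',
          Real.rpow_one]
    _ ≤ ((∑ i ∈ s, z i) / #s) ^ #s := by gcongr; exact Real.rpow_nonneg (prod_nonneg hz) _

theorem Real.prod_eq_mean_pow_card_of_forall_eq {ι : Type*} (s : Finset ι) (z : ι → ℝ) (c : ℝ)
    (hz : ∀ i ∈ s, z i = c) :
    ∏ i ∈ s, z i = ((∑ i ∈ s, z i) / #s) ^ #s := by
  rcases s.eq_empty_or_nonempty with rfl | hs
  · simp
  have hcard : (#s : ℝ) ≠ 0 := by exact_mod_cast hs.card_pos.ne'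
  rw [prod_congr rfl hz, sum_congr rfl hz, prod_const, sum_const, nsmul_eq_mul,
    mul_div_cancel_left₀ c hcard]

namespace SimpleGraph

theorem degree_eq_card_inl_add_card_inr {α β : Type*} [Fintype α] [Fintype β]
    (H : SimpleGraph (α ⊕ β)) [DecidableRel H.Adj] (x : α ⊕ β) :
    H.degree x = #{a | H.Adj x (.inl a)} + #{b | H.Adj x (.inr b)} := by
  rw [← card_neighborFinset_eq_degree, neighborFinset_eq_filter,
    ← card_toLeft_add_card_toRight]
  congr 2 <;> ext <;> simp

theorem card_filter_edgeSet {α : Type*} [Fintype α] (G : SimpleGraph α) [DecidableRel G.Adj]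
    (p : Sym2 α → Prop) [DecidablePred p] :
    #{e : G.edgeSet | p e} = #{e ∈ G.edgeFinset | p e} := by
  rw [← card_map (Function.Embedding.subtype _)]
  congr 1
  ext e
  simp [and_comm]

theorem card_incidenceFinset_union_add_one {α : Type*} [Fintype α] [DecidableEq α]
    (G : SimpleGraph α) [DecidableRel G.Adj] {a b : α} (h : G.Adj a b) :
    #(G.incidenceFinset a ∪ G.incidenceFinset b) + 1 = G.degree a + G.degree b := by
  have hinter : G.incidenceFinset a ∩ G.incidenceFinset b = {s(a, b)} := by
    rw [← coe_inj, coe_inter, coe_incidenceFinset, coe_incidenceFinset,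
      G.incidenceSet_inter_incidenceSet_of_adj h, coe_singleton]
  rw [← card_incidenceFinset_eq_degree, ← card_incidenceFinset_eq_degree,
    ← card_union_add_card_inter, hinter, card_singleton]

theorem sum_edgeFinset_sum_toFinset {α M : Type*} [Fintype α] [DecidableEq α]
    [AddCommMonoid M] (G : SimpleGraph α) [DecidableRel G.Adj] (f : α → M) :
    ∑ e ∈ G.edgeFinset, ∑ v ∈ e.toFinset, f v = ∑ v, G.degree v • f v := by
  rw [sum_comm' (t' := univ) (s' := fun v ↦ G.incidenceFinset v)]
  · simp [← card_incidenceFinset_eq_degree]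
  · intro e v
    simp [incidenceFinset_eq_filter]

end SimpleGraph

theorem coshareRel_mk_iff {α : Type*} {a b : α} {f : Sym2 α} :
    coshareRel s(a, b) f ↔ ¬(a ∈ f ∨ b ∈ f) := by
  refine ⟨fun ⟨_, h⟩ ↦ not_or.2 ⟨h a (Sym2.mem_mk_left a b), h b (Sym2.mem_mk_right a b)⟩,
    fun hab ↦ ?_⟩
  obtain ⟨ha, hb⟩ := not_or.1 hab
  refine ⟨?_, fun w hw ↦ ?_⟩
  · rintro rfl
    exact ha (Sym2.mem_mk_left a b)
  · rcases Sym2.mem_iff.1 hw with rfl | rfl <;> assumption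

section Gpmm

open SimpleGraph

variable (G : SimpleGraph V) [DecidableRel G.Adj]

theorem Gpmm_degree_inl (u : V) : (Gpmm G).degree (.inl u) = #G.edgeFinset := by
  rw [degree_eq_card_inl_add_card_inr]
  change #{v | G.Adj u v} + #{e : G.edgeSet | u ∉ (e : Sym2 V)} = _
  rw [card_filter_edgeSet G (u ∉ ·), ← neighborFinset_eq_filter, card_neighborFinset_eq_degree,
    ← card_incidenceFinset_eq_degree, incidenceFinset_eq_filter,
    card_filter_add_card_filter_not]

theorem Gpmm_degree_inr (e : G.edgeSet) :
    (Gpmm G).degree (.inr e) + ∑ v ∈ (e : Sym2 V).toFinset, G.degree v + 1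
      = #G.edgeFinset + Fintype.card V := by
  obtain ⟨e, he⟩ := e
  induction e with | h a b => ?_
  have hab : G.Adj a b := he
  rw [degree_eq_card_inl_add_card_inr, Sym2.toFinset_mk_eq, sum_pair hab.ne]
  change #{w | w ∉ s(a, b)} + #{f : G.edgeSet | coshareRel s(a, b) (f : Sym2 V)} + _ + 1 = _
  have hV : #{w | w ∉ s(a, b)} + 2 = Fintype.card V := by
    have hmem : ({w | w ∈ s(a, b)} : Finset V) = {a, b} := by ext; simp
    rw [← card_pair hab.ne, ← hmem, add_comm, card_filter_add_card_filter_not, card_univ]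
  have hE : #{f ∈ G.edgeFinset | ¬(a ∈ f ∨ b ∈ f)} + #(G.incidenceFinset a ∪ G.incidenceFinset b)
      = #G.edgeFinset := by
    rw [incidenceFinset_eq_filter, incidenceFinset_eq_filter, ← filter_or, add_comm,
      card_filter_add_card_filter_not]
  rw [card_filter_edgeSet G (coshareRel s(a, b))]
  simp_rw [coshareRel_mk_iff]
  have := card_incidenceFinset_union_add_one G hab
  omega

theorem Gpmm_degree_inr_of_isRegularOfDegree {r : ℕ} (hr : G.IsRegularOfDegree r)
    (e : G.edgeSet) :
    (Gpmm G).degree (.inr e) + 2 * r + 1 = #G.edgeFinset + Fintype.card V := by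
  have hsum : ∑ v ∈ (e : Sym2 V).toFinset, G.degree v = 2 * r := by
    rw [sum_congr rfl fun v _ ↦ hr v, sum_const, smul_eq_mul,
      Sym2.card_toFinset_of_not_isDiag _ (G.not_isDiag_of_mem_edgeSet e.2)]
  rw [← hsum, Gpmm_degree_inr]

theorem sum_Gpmm_degree_inr :
    ∑ e : G.edgeSet, (Gpmm G).degree (.inr e) + M1 G + #G.edgeFinset
      = #G.edgeFinset * (#G.edgeFinset + Fintype.card V) := by
  have hM1 : ∑ e : G.edgeSet, ∑ v ∈ (e : Sym2 V).toFinset, G.degree v = M1 G := by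
    rw [sum_set_coe (f := fun e : Sym2 V ↦ ∑ v ∈ e.toFinset, G.degree v), ← edgeFinset,
      sum_edgeFinset_sum_toFinset, M1]
    simp only [smul_eq_mul, sq]
  have h := sum_congr rfl fun e (_ : e ∈ univ) ↦ Gpmm_degree_inr G e
  rw [sum_add_distrib, sum_add_distrib, hM1, sum_const, sum_const, card_univ,
    ← edgeFinset_card, smul_eq_mul, smul_eq_mul, mul_one] at h
  exact h

end Gpmm

theorem stmt_14 (G : SimpleGraph V) [DecidableRel G.Adj]
    (hm : 1 ≤ G.edgeFinset.card) :
    (NK (Gpmm G) : ℝ) ≤ (G.edgeFinset.card : ℝ) ^ Fintype.card V * (((G.edgeFinset.card : ℝ) + Fintype.card V - 1) - (M1 G : ℝ) / G.edgeFinset.card) ^ G.edgeFinset.card ∧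
      ((∃ r, G.IsRegularOfDegree r) → (NK (Gpmm G) : ℝ) = (G.edgeFinset.card : ℝ) ^ Fintype.card V * (((G.edgeFinset.card : ℝ) + Fintype.card V - 1) - (M1 G : ℝ) / G.edgeFinset.card) ^ G.edgeFinset.card) := by
  set m := #G.edgeFinset
  set n := Fintype.card V
  set z : G.edgeSet → ℝ := fun e ↦ (Gpmm G).degree (.inr e)
  have hNK : (NK (Gpmm G) : ℝ) = m ^ n * ∏ e, z e := by
    simp only [NK, Fintype.prod_sum_type, Gpmm_degree_inl, prod_const, card_univ]
    push_cast
    rfl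
  have hcard : #(univ : Finset G.edgeSet) = m := by rw [card_univ, ← G.edgeFinset_card]
  have hmean : (∑ e, z e) / m = ((m : ℝ) + n - 1) - M1 G / m := by
    have hsum : ∑ e, z e + M1 G + m = (m : ℝ) * (m + n) := by
      simp only [z, m, n]
      exact_mod_cast sum_Gpmm_degree_inr G
    have hm0 : (m : ℝ) ≠ 0 := Nat.cast_ne_zero.2 (Nat.one_le_iff_ne_zero.1 hm)
    field_simp
    linarith
  refine ⟨?_, fun ⟨r, hr⟩ ↦ ?_⟩
  · have hamgm := Real.prod_le_mean_pow_card univ z fun _ _ ↦ Nat.cast_nonneg _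
    rw [hcard, hmean] at hamgm
    rw [hNK]
    gcongr
  · have hconst : ∀ e ∈ univ, z e = (m : ℝ) + n - (2 * r + 1) := fun e _ ↦ by
      rw [eq_sub_iff_add_eq]
      simp only [z, m, n]
      exact_mod_cast Gpmm_degree_inr_of_isRegularOfDegree G hr e
    have hamgm := Real.prod_eq_mean_pow_card_of_forall_eq univ z _ hconst
    rw [hcard, hmean] at hamgm
    rw [hNK, hamgm]
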